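/- arXiv:1902.07183 — 5 statements merged into one kernel-verified Lean document; each statement's English description precedes it below -/
import Mathlib

section
/- Let L be a module over a commutative ring and let inl, inr : L → L⊕L be the two canonical inclusions, inducing algebra homomorphisms Λ^* L → Λ^*(L⊕L). Then for all a_1,…,a_k ∈ L one has ((a_1,0)∧(0,a_1))∧⋯∧((a_k,0)∧(0,a_k)) = (−1)^{k(k−1)/2}·(Λ^k inl)(a_1∧⋯∧a_k) ∧ (Λ^k inr)(a_1∧⋯∧a_k) in Λ^{2k}(L⊕L). Consequently, for a decomposable element α = a_1∧⋯∧a_k ∈ Λ^k L, the 'square' α^□ := ⋀_{i=1}^k ((a_i,0)∧(0,a_i)) depends only on the element α and not on the chosen decomposition, and (−α)^□ = α^□. -/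
/-!
Since `ι R x` and `ι R y` anticommute, moving `ι R v` past a product of `n` generators costs
the sign `(-1)^n`. Sorting `∏ᵢ (ι (f i) * ι (g i))` into `(∏ᵢ ι (f i)) * (∏ᵢ ι (g i))` moves
the `i`-th factor `ι (g i)` past `k - 1 - i` generators, for a total sign `(-1)^(k(k-1)/2)`.
Applied to `f = inl ∘ a`, `g = inr ∘ a` this writes the square as `± (map inl α) * (map inr α)`
with `α = ιMulti a`, which is visibly a function of `α` and is quadratic in it.
-/

open ExteriorAlgebra

namespace ExteriorAlgebra

variable {R M : Type*} [CommRing R] [AddCommGroup M] [Module R M]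

theorem ι_mul_ι_anticomm (x y : M) : ι R x * ι R y = -(ι R y * ι R x) :=
  eq_neg_of_add_eq_zero_left (ι_add_mul_swap x y)

theorem ι_mul_ιMulti_comm {n : ℕ} (v : M) (f : Fin n → M) :
    ι R v * ιMulti R n f = (-1 : R) ^ n • (ιMulti R n f * ι R v) := by
  induction n with
  | zero => simp
  | succ n ih =>
    rw [ιMulti_succ_apply, ← mul_assoc, ι_mul_ι_anticomm, neg_mul, mul_assoc, ih, mul_smul_comm,
      pow_succ', neg_one_mul, neg_smul, mul_assoc]

theorem prod_ofFn_ι_mul_ι {n : ℕ} (f g : Fin n → M) :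
    (List.ofFn fun i => ι R (f i) * ι R (g i)).prod =
      (-1 : R) ^ (n * (n - 1) / 2) • (ιMulti R n f * ιMulti R n g) := by
  induction n with
  | zero => simp
  | succ n ih =>
    rw [List.ofFn_succ, List.prod_cons, ih, ιMulti_succ_apply, ιMulti_succ_apply, Nat.triangle_succ,
      pow_add, mul_smul, mul_smul_comm]
    congr 1
    calc ι R (f 0) * ι R (g 0) * (ιMulti R n (fun i => f i.succ) * ιMulti R n (fun i => g i.succ))
        = ι R (f 0) * (ι R (g 0) * ιMulti R n (fun i => f i.succ)) *
            ιMulti R n (fun i => g i.succ) := by noncomm_ring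
      _ = (-1 : R) ^ n • (ι R (f 0) * ιMulti R n (Matrix.vecTail f) *
            (ι R (g 0) * ιMulti R n (Matrix.vecTail g))) := by
        rw [ι_mul_ιMulti_comm, mul_smul_comm, smul_mul_assoc]
        simp only [Matrix.vecTail, Function.comp_def, mul_assoc]

theorem prod_ofFn_ι_inl_mul_ι_inr {L : Type*} [AddCommGroup L] [Module R L] {k : ℕ}
    (a : Fin k → L) :
    (List.ofFn fun i => ι R ((a i, (0 : L)) : L × L) * ι R (((0 : L), a i) : L × L)).prod =
      (-1 : R) ^ (k * (k - 1) / 2) •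
        (map (LinearMap.inl R L L) (ιMulti R k a) * map (LinearMap.inr R L L) (ιMulti R k a)) := by
  rw [map_apply_ιMulti, map_apply_ιMulti]
  exact prod_ofFn_ι_mul_ι _ _

end ExteriorAlgebra

/-- **The squaring trick** (equation (squaring) of the paper).
For a module `L` over a commutative ring `R` and `a_1, …, a_k ∈ L` one has
`((a_1,0)∧(0,a_1))∧⋯∧((a_k,0)∧(0,a_k))
  = (−1)^{k(k−1)/2} (Λ^k inl)(a_1∧⋯∧a_k) ∧ (Λ^k inr)(a_1∧⋯∧a_k)`
in `Λ^{2k}(L⊕L)`.  Consequently, for a decomposable `α = a_1∧⋯∧a_k ∈ Λ^k L` the square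
`α^□ := ⋀ᵢ ((a_i,0)∧(0,a_i))` depends only on `α` and not on the chosen decomposition,
and `(−α)^□ = α^□`. -/
theorem squaring_trick (R : Type) [CommRing R] (L : Type) [AddCommGroup L] [Module R L]
    (k : ℕ) (a : Fin k → L) :
    ((List.ofFn fun i => ExteriorAlgebra.ι R ((a i, (0 : L)) : L × L) *
        ExteriorAlgebra.ι R (((0 : L), a i) : L × L)).prod =
      ((-1 : R) ^ (k * (k - 1) / 2)) •
        (ExteriorAlgebra.map (LinearMap.inl R L L) (ExteriorAlgebra.ιMulti R k a) *
          ExteriorAlgebra.map (LinearMap.inr R L L) (ExteriorAlgebra.ιMulti R k a))) ∧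
    (∀ b : Fin k → L,
      (ExteriorAlgebra.ιMulti R k a = ExteriorAlgebra.ιMulti R k b ∨
        ExteriorAlgebra.ιMulti R k a = -ExteriorAlgebra.ιMulti R k b) →
      (List.ofFn fun i => ExteriorAlgebra.ι R ((a i, (0 : L)) : L × L) *
          ExteriorAlgebra.ι R (((0 : L), a i) : L × L)).prod =
        (List.ofFn fun i => ExteriorAlgebra.ι R ((b i, (0 : L)) : L × L) *
          ExteriorAlgebra.ι R (((0 : L), b i) : L × L)).prod) := by
  refine ⟨prod_ofFn_ι_inl_mul_ι_inr a, fun b hab => ?_⟩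
  rw [prod_ofFn_ι_inl_mul_ι_inr a, prod_ofFn_ι_inl_mul_ι_inr b]
  rcases hab with hab | hab
  · rw [hab]
  · rw [hab, map_neg, map_neg, neg_mul_neg]
end

section
/- Let N be a lattice of finite rank r with dual M := Hom_ℤ(N,ℤ), and let n ∈ N be primitive. Set M_n := {m ∈ M : m(n) = 0}. Then: (a) the image of the contraction ι_n : Λ^* M → Λ^* M equals the subalgebra Λ^* M_n ⊆ Λ^* M, and this subalgebra also equals the kernel of ι_n; (b) the image of the composite contraction ι_{(0,n)} ∘ ι_{(n,0)} : Λ^*(M⊕M) → Λ^*(M⊕M), where (n,0) and (0,n) are viewed as elements of N⊕N = Hom(M⊕M,ℤ), equals the subalgebra Λ^*(M_n⊕M_n) ⊆ Λ^*(M⊕M). -/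
/-!
If `d e = 1`, the contraction `ι_d` on `Λ M` satisfies the homotopy identity
`ι_d (e ∧ x) + e ∧ ι_d x = x`. Hence `ker ι_d ⊆ range ι_d`, and on `ker ι_d` we have
`x = ι_d (e ∧ x)`. The operator `x ↦ ι_d (e ∧ x)` is the algebra map `Λ π` induced by the
projection `π m = m - d(m) e` onto `ker d`, so `ker ι_d ⊆ Λ (ker d)`; conversely `ι_d` is an
antiderivation killing `ker d`. For the double contraction pick `d' e' = 1` with `d e' = 0`:
then `x = ι_{d'} ι_d (e ∧ e' ∧ x)` on `ker ι_d ∩ ker ι_{d'}`,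
and there `x = Λ (π' ∘ π) x`.

For `d = eval n` with `n` primitive such an `e` exists: the values `f n` form an ideal `(a)` of
`ℤ`, every coordinate of `n` is divisible by `a`, so `n ∈ a • N` and `|a| = 1`.
-/

open Module

/-- `n ∈ N` is primitive: it is not a positive multiple of any other lattice element. -/
def IsPrimitiveElt {N : Type} [AddCommGroup N] (n : N) : Prop :=
  ∀ (k : ℤ), 0 < k → ∀ m : N, n = k • m → k = 1

theorem Module.Free.exists_eq_smul_of_forall_dvd {R N : Type*} [CommRing R] [AddCommGroup N]
    [Module R N] [Module.Free R N] [Module.Finite R N] {n : N} {a : R}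
    (h : ∀ f : Dual R N, a ∣ f n) : ∃ n' : N, n = a • n' := by
  let b := Free.chooseBasis R N
  choose c hc using fun i => h (b.coord i)
  refine ⟨∑ i, c i • b i, ?_⟩
  conv_lhs => rw [← b.sum_repr n]
  simp only [Finset.smul_sum, smul_smul, ← hc, Basis.coord_apply]

theorem IsPrimitiveElt.exists_dual_eq_one {N : Type} [AddCommGroup N] [Module.Free ℤ N]
    [Module.Finite ℤ N] {n : N} (hn : IsPrimitiveElt n) : ∃ f : Dual ℤ N, f n = 1 := by
  let I : Submodule ℤ ℤ := LinearMap.range (Dual.eval ℤ N n)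
  obtain ⟨f₀, hf₀⟩ := Submodule.IsPrincipal.generator_mem I
  set a := Submodule.IsPrincipal.generator I
  have hdvd : ∀ f : Dual ℤ N, a ∣ f n := fun f => by
    obtain ⟨c, hc⟩ := (Submodule.IsPrincipal.mem_iff_eq_smul_generator I).mp ⟨f, rfl⟩
    exact ⟨c, hc.trans (mul_comm c a)⟩
  obtain ⟨n', hn'⟩ := Module.Free.exists_eq_smul_of_forall_dvd hdvd
  have ha : a ≠ 0 := by
    rintro ha
    rw [ha, zero_smul] at hn'
    simpa using hn 2 two_pos 0 (by rw [hn', smul_zero])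
  have habs : |a| = 1 :=
    hn |a| (abs_pos.mpr ha) (Int.sign a • n') (by rw [smul_smul, mul_comm, Int.sign_mul_abs, hn'])
  refine ⟨Int.sign a • f₀, ?_⟩
  rw [LinearMap.smul_apply, ← Dual.eval_apply, hf₀, smul_eq_mul, Int.sign_mul_self_eq_abs, habs]

namespace ExteriorAlgebra

open CliffordAlgebra

variable {R M N : Type*} [CommRing R] [AddCommGroup M] [Module R M] [AddCommGroup N] [Module R N]

theorem contractLeft_ι_mul (d : Dual R M) (m : M) (x : ExteriorAlgebra R M) :
    contractLeft d (ι R m * x) = d m • x - ι R m * contractLeft d x :=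
  CliffordAlgebra.contractLeft_ι_mul (d := d) m x

theorem ι_mul_contractLeft_ι_mul (d : Dual R M) (m : M) (x : ExteriorAlgebra R M) :
    ι R m * contractLeft d (ι R m * x) = d m • (ι R m * x) := by
  rw [contractLeft_ι_mul, mul_sub, ← mul_assoc, ι_sq_zero, zero_mul, sub_zero, mul_smul_comm]

theorem map_mem_adjoin_ι (f : M →ₗ[R] N) {K : Submodule R N} (hf : LinearMap.range f ≤ K)
    (x : ExteriorAlgebra R M) : map f x ∈ Algebra.adjoin R (ι R '' K) := by
  induction x using ExteriorAlgebra.induction with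
  | algebraMap r => simpa only [AlgHom.commutes] using Subalgebra.algebraMap_mem _ r
  | ι m => exact Algebra.subset_adjoin ⟨f m, hf ⟨m, rfl⟩, (map_apply_ι f m).symm⟩
  | mul x y hx hy => simpa only [map_mul] using mul_mem hx hy
  | add x y hx hy => simpa only [map_add] using add_mem hx hy

theorem adjoin_ι_le_ker_contractLeft (d : Dual R M) {K : Submodule R M}
    (hK : K ≤ LinearMap.ker d) :
    Subalgebra.toSubmodule (Algebra.adjoin R (ι R '' K)) ≤ LinearMap.ker (contractLeft d) := by
  rw [Algebra.adjoin_eq_span, Submodule.span_le]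
  intro x hx
  induction hx using Submonoid.closure_induction_left with
  | one => exact contractLeft_one (Q := 0) d
  | mul_left _ hm y _ hy =>
    obtain ⟨k, hk, rfl⟩ := hm
    change contractLeft d y = 0 at hy
    change contractLeft d (ι R k * y) = 0
    rw [contractLeft_ι_mul, hK hk, hy, zero_smul, mul_zero, sub_zero]

def kerProjection (d : Dual R M) (e : M) : M →ₗ[R] M := LinearMap.id - d.smulRight e

theorem kerProjection_apply (d : Dual R M) (e m : M) : kerProjection d e m = m - d m • e := rfl

variable {d : Dual R M} {e : M}

theorem range_kerProjection_le (hde : d e = 1) :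
    LinearMap.range (kerProjection d e) ≤ LinearMap.ker d := by
  rintro _ ⟨m, rfl⟩
  simp [kerProjection_apply, hde]

theorem contractLeft_ι_mul_of_mem_ker (hde : d e = 1) {x : ExteriorAlgebra R M}
    (hx : contractLeft d x = 0) : contractLeft d (ι R e * x) = x := by
  rw [contractLeft_ι_mul, hde, one_smul, hx, mul_zero, sub_zero]

theorem contractLeft_ι_mul_eq_map (hde : d e = 1) (x : ExteriorAlgebra R M) :
    contractLeft d (ι R e * x) = map (kerProjection d e) x := by
  induction x using CliffordAlgebra.left_induction with
  | algebraMap r =>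
    rw [AlgHom.commutes, ← Algebra.commutes, contractLeft_algebraMap_mul,
      contractLeft_ι (Q := 0), hde, map_one, mul_one]
  | add x y hx hy => rw [mul_add, map_add, map_add, hx, hy]
  | ι_mul x m hx =>
    change contractLeft d (ι R e * (ι R m * x)) = map (kerProjection d e) (ι R m * x)
    rw [map_mul (map (kerProjection d e)), map_apply_ι, ← hx, kerProjection_apply, map_sub,
      map_smul, sub_mul, smul_mul_assoc, ι_mul_contractLeft_ι_mul, hde, one_smul,
      ι_mul_ι_mul_of_isOrtho _ (QuadraticMap.IsOrtho.all e m), map_neg, contractLeft_ι_mul,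
      neg_sub]

theorem range_contractLeft_eq_ker (hde : d e = 1) :
    LinearMap.range (contractLeft d : ExteriorAlgebra R M →ₗ[R] ExteriorAlgebra R M) =
      LinearMap.ker (contractLeft d) := by
  refine le_antisymm ?_ fun x hx => ⟨ι R e * x, contractLeft_ι_mul_of_mem_ker hde hx⟩
  rintro _ ⟨x, rfl⟩
  exact contractLeft_contractLeft (Q := 0) d x

theorem ker_contractLeft_eq_adjoin (hde : d e = 1) :
    LinearMap.ker (contractLeft d : ExteriorAlgebra R M →ₗ[R] ExteriorAlgebra R M) =
      Subalgebra.toSubmodule (Algebra.adjoin R (ι R '' LinearMap.ker d)) := by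
  refine le_antisymm (fun x hx => ?_) (adjoin_ι_le_ker_contractLeft d le_rfl)
  rw [← contractLeft_ι_mul_of_mem_ker hde hx, contractLeft_ι_mul_eq_map hde]
  exact map_mem_adjoin_ι _ (range_kerProjection_le hde) x

variable {d' : Dual R M} {e' : M}

theorem range_contractLeft_comp_contractLeft (hde : d e = 1) (hde' : d' e' = 1)
    (hde'' : d e' = 0) :
    LinearMap.range ((contractLeft d' : ExteriorAlgebra R M →ₗ[R] ExteriorAlgebra R M) ∘ₗ
      contractLeft d) = LinearMap.ker (contractLeft d) ⊓ LinearMap.ker (contractLeft d') := by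
  refine le_antisymm ?_ fun x hx => ⟨ι R e * (ι R e' * x), ?_⟩
  · rintro _ ⟨x, rfl⟩
    refine ⟨?_, contractLeft_contractLeft (Q := 0) d' _⟩
    change contractLeft d (contractLeft d' (contractLeft d x)) = 0
    rw [contractLeft_comm, contractLeft_contractLeft, map_zero, neg_zero]
  · have hx' : contractLeft d (ι R e' * x) = 0 := by
      rw [contractLeft_ι_mul, hde'', zero_smul, hx.1, mul_zero, sub_zero]
    rw [LinearMap.comp_apply, contractLeft_ι_mul_of_mem_ker hde hx',
      contractLeft_ι_mul_of_mem_ker hde' hx.2]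

theorem ker_contractLeft_inf_ker_contractLeft (hde : d e = 1) (hde' : d' e' = 1)
    (hde'' : d e' = 0) :
    LinearMap.ker (contractLeft d : ExteriorAlgebra R M →ₗ[R] ExteriorAlgebra R M) ⊓
      LinearMap.ker (contractLeft d') = Subalgebra.toSubmodule (Algebra.adjoin R
        (ι R '' ((LinearMap.ker d ⊓ LinearMap.ker d' : Submodule R M) : Set M))) := by
  refine le_antisymm (fun x hx => ?_) (le_inf (adjoin_ι_le_ker_contractLeft d inf_le_left)
    (adjoin_ι_le_ker_contractLeft d' inf_le_right))
  have hx' : x = map (kerProjection d' e' ∘ₗ kerProjection d e) x := by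
    rw [← map_comp_map, AlgHom.comp_apply, ← contractLeft_ι_mul_eq_map hde,
      contractLeft_ι_mul_of_mem_ker hde hx.1, ← contractLeft_ι_mul_eq_map hde',
      contractLeft_ι_mul_of_mem_ker hde' hx.2]
  rw [hx']
  refine map_mem_adjoin_ι _ ?_ x
  rintro _ ⟨m, rfl⟩
  simp [kerProjection_apply, hde, hde', hde'']

end ExteriorAlgebra

/-- **Image of the contraction operators** (identification of the Frobenius algebras `𝒞_n`
inside `𝒞_0` in the multiplicity TrQFT).  Let `N` be a lattice with dual `M` and `n ∈ N`
primitive, `M_n := n^⊥ ⊆ M`.  Then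
(a) the image of the contraction `ι_n : Λ^* M → Λ^* M` equals the subalgebra
`Λ^* M_n ⊆ Λ^* M`, and this subalgebra also equals the kernel of `ι_n`;
(b) the image of `ι_{(0,n)} ∘ ι_{(n,0)} : Λ^*(M⊕M) → Λ^*(M⊕M)` equals the subalgebra
`Λ^*(M_n ⊕ M_n)`. -/
theorem contraction_image (N : Type) [AddCommGroup N] [Module.Free ℤ N] [Module.Finite ℤ N]
    (n : N) (hn : IsPrimitiveElt n) :
    (LinearMap.range (CliffordAlgebra.contractLeft (Module.Dual.eval ℤ N n) :
        ExteriorAlgebra ℤ (Module.Dual ℤ N) →ₗ[ℤ] ExteriorAlgebra ℤ (Module.Dual ℤ N)) =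
      Subalgebra.toSubmodule (Algebra.adjoin ℤ
        ((Submodule.map (ExteriorAlgebra.ι ℤ)
          (LinearMap.ker (Module.Dual.eval ℤ N n)) :
            Submodule ℤ (ExteriorAlgebra ℤ (Module.Dual ℤ N))) : Set _)) ∧
      LinearMap.range (CliffordAlgebra.contractLeft (Module.Dual.eval ℤ N n) :
          ExteriorAlgebra ℤ (Module.Dual ℤ N) →ₗ[ℤ] ExteriorAlgebra ℤ (Module.Dual ℤ N)) =
        LinearMap.ker (CliffordAlgebra.contractLeft (Module.Dual.eval ℤ N n) :
          ExteriorAlgebra ℤ (Module.Dual ℤ N) →ₗ[ℤ] ExteriorAlgebra ℤ (Module.Dual ℤ N))) ∧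
    LinearMap.range
        ((CliffordAlgebra.contractLeft
            ((Module.Dual.eval ℤ N n).comp (LinearMap.snd ℤ (Module.Dual ℤ N) (Module.Dual ℤ N)) :
              Module.Dual ℤ (Module.Dual ℤ N × Module.Dual ℤ N)) :
          ExteriorAlgebra ℤ (Module.Dual ℤ N × Module.Dual ℤ N) →ₗ[ℤ]
            ExteriorAlgebra ℤ (Module.Dual ℤ N × Module.Dual ℤ N)) ∘ₗ
         (CliffordAlgebra.contractLeft
            ((Module.Dual.eval ℤ N n).comp (LinearMap.fst ℤ (Module.Dual ℤ N) (Module.Dual ℤ N)) :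
              Module.Dual ℤ (Module.Dual ℤ N × Module.Dual ℤ N)) :
          ExteriorAlgebra ℤ (Module.Dual ℤ N × Module.Dual ℤ N) →ₗ[ℤ]
            ExteriorAlgebra ℤ (Module.Dual ℤ N × Module.Dual ℤ N))) =
      Subalgebra.toSubmodule (Algebra.adjoin ℤ
        ((Submodule.map (ExteriorAlgebra.ι ℤ)
          ((LinearMap.ker (Module.Dual.eval ℤ N n)).prod
            (LinearMap.ker (Module.Dual.eval ℤ N n))) :
            Submodule ℤ (ExteriorAlgebra ℤ (Module.Dual ℤ N × Module.Dual ℤ N))) : Set _)) := by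
  obtain ⟨f, hf⟩ := hn.exists_dual_eq_one
  let d₁ := (Dual.eval ℤ N n).comp (LinearMap.fst ℤ (Dual ℤ N) (Dual ℤ N))
  let d₂ := (Dual.eval ℤ N n).comp (LinearMap.snd ℤ (Dual ℤ N) (Dual ℤ N))
  have h₁ : d₁ (f, 0) = 1 := hf
  have h₂ : d₂ (0, f) = 1 := hf
  have h₁₂ : d₁ (0, f) = 0 := map_zero (Dual.eval ℤ N n)
  refine ⟨⟨?_, ExteriorAlgebra.range_contractLeft_eq_ker (e := f) hf⟩, ?_⟩
  · rw [ExteriorAlgebra.range_contractLeft_eq_ker (e := f) hf,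
      ExteriorAlgebra.ker_contractLeft_eq_adjoin (e := f) hf, Submodule.map_coe]
  · rw [ExteriorAlgebra.range_contractLeft_comp_contractLeft h₁ h₂ h₁₂,
      ExteriorAlgebra.ker_contractLeft_inf_ker_contractLeft h₁ h₂ h₁₂, Submodule.map_coe,
      LinearMap.ker_comp, LinearMap.ker_comp, LinearMap.prod_eq_inf_comap]
end

section
/- Let N be a lattice with dual M := Hom_ℤ(N,ℤ), and let A := ℤ[N] ⊗_ℤ Λ^* M with product (z^{m}⊗γ)·(z^{m′}⊗γ′) = z^{m+m′}⊗(γ∧γ′). For u = z^{m}⊗γ and u′ = z^{m′}⊗γ′ with γ, γ′ ∈ M, define the Lie bracket [u, u′] := z^{m+m′}⊗(γ(m′)·γ′ − γ′(m)·γ) ∈ ℤ[N]⊗M. Fix n_1, n_2 ∈ N, integers k, ℓ ≥ 0, and α_0,…,α_k, β_0,…,β_ℓ ∈ M; set a_0 := z^{n_1}⊗α_0, a_i := z^0⊗α_i for 1 ≤ i ≤ k, b_0 := z^{n_2}⊗β_0, b_j := z^0⊗β_j for 1 ≤ j ≤ ℓ, α := α_0∧⋯∧α_k and β := β_0∧⋯∧β_ℓ.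 Then, in A: Σ_{i=0}^{k} Σ_{j=0}^{ℓ} (−1)^{i+j}·[a_i, b_j]·a_0⋯â_i⋯a_k·b_0⋯b̂_j⋯b_ℓ = (−1)^k · z^{n_1+n_2} ⊗ ( ι_{n_2}(α)∧β + (−1)^{k+1}·α∧ι_{n_1}(β) ), where hats denote omitted factors. -/
/-!
Every monomial `z^{m_i + m'_j} ⊗ (…) · a_0⋯â_i⋯a_k · b_0⋯b̂_j⋯b_ℓ` has total exponent
`Σ m + Σ m'`, so the left side is `z^{n₁+n₂}` times a sum in `Λ M`; this works for arbitrary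
exponents `m_i`, `m'_j`, with `n₁ = Σ m_i` and `n₂ = Σ m'_j`. In `Λ M` the bracket splits the
sum into two double sums. In the first, `ι(β_j)` is moved across the `k` factors of
`α_0∧⋯α̂_i⋯∧α_k` and back into its slot of `β`, which costs `(-1)^k (-1)^j`; summing
`α_i(m'_j)` over `j` leaves `(-1)^k Σ_i (-1)^i α_i(n₂) α_0∧⋯α̂_i⋯∧α_k ∧ β = (-1)^k ι_{n₂}(α) ∧ β`
by the Leibniz expansion of the contraction. The second double sum gives `α ∧ ι_{n₁}(β)` in
the same way.
-/

open Module

/-- Contraction `ι_n` on `Λ^* M`, `M := Hom(N, ℤ)`, by a lattice element `n ∈ N`. -/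
noncomputable def ctr {N : Type} [AddCommGroup N] (n : N) :
    ExteriorAlgebra ℤ (Module.Dual ℤ N) →ₗ[ℤ] ExteriorAlgebra ℤ (Module.Dual ℤ N) :=
  CliffordAlgebra.contractLeft (Module.Dual.eval ℤ N n)

theorem neg_one_pow_add_mul_neg_one_pow {R : Type*} [Monoid R] [HasDistribNeg R] (i j : ℕ) :
    (-1 : R) ^ (i + j) * (-1) ^ j = (-1) ^ i := by
  rw [pow_add, mul_assoc, ← pow_add, Even.neg_one_pow ⟨j, rfl⟩, mul_one]

namespace AddMonoidAlgebra

variable {A G : Type*} [Semiring A]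

theorem prod_ofFn_single [AddCommMonoid G] {n : ℕ} (g : Fin n → G) (x : Fin n → A) :
    (List.ofFn fun t => single (g t) (x t)).prod = single (∑ t, g t) (List.ofFn x).prod := by
  induction n with
  | zero => rfl
  | succ n ih =>
    rw [List.ofFn_succ, List.prod_cons, ih (fun t => g t.succ), single_mul_single,
      Fin.sum_univ_succ, List.ofFn_succ, List.prod_cons]

theorem prod_ofFn_single_eraseIdx [AddCommGroup G] {n : ℕ} (g : Fin n → G) (x : Fin n → A)
    (i : Fin n) :
    ((List.ofFn fun t => single (g t) (x t)).eraseIdx i).prod =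
      single (∑ t, g t - g i) ((List.ofFn x).eraseIdx i).prod := by
  induction n with
  | zero => exact i.elim0
  | succ n ih =>
    rw [List.ofFn_succ, List.ofFn_succ, Fin.sum_univ_succ]
    induction i using Fin.cases with
    | zero => rw [Fin.val_zero, List.eraseIdx_cons_zero, List.eraseIdx_cons_zero,
        prod_ofFn_single, add_sub_cancel_left]
    | succ i =>
      rw [Fin.val_succ, List.eraseIdx_cons_succ, List.eraseIdx_cons_succ, List.prod_cons,
        List.prod_cons, ih (fun t => g t.succ), single_mul_single, add_sub_assoc]

theorem sum_sum_smul_single_mul_prod_eraseIdx [AddCommGroup G] {S : Type*} [SMulZeroClass S A]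
    {k ℓ : ℕ} (s : Fin k → Fin ℓ → S) (y : Fin k → Fin ℓ → A)
    (g : Fin k → G) (x : Fin k → A) (h : Fin ℓ → G) (z : Fin ℓ → A) :
    ∑ i, ∑ j, s i j • (single (g i + h j) (y i j) *
        ((List.ofFn fun t => single (g t) (x t)).eraseIdx i).prod *
        ((List.ofFn fun t => single (h t) (z t)).eraseIdx j).prod) =
      single (∑ t, g t + ∑ t, h t) (∑ i, ∑ j, s i j • (y i j *
        ((List.ofFn x).eraseIdx i).prod * ((List.ofFn z).eraseIdx j).prod)) := by
  have hdeg : ∀ i j, g i + h j + (∑ t, g t - g i) + (∑ t, h t - h j) = ∑ t, g t + ∑ t, h t :=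
    fun i j => by abel
  simp only [prod_ofFn_single_eraseIdx, single_mul_single, hdeg, smul_single]
  simp only [← singleAddHom_apply, ← map_sum]

end AddMonoidAlgebra

namespace ExteriorAlgebra

open CliffordAlgebra (contractLeft contractLeft_ι_mul contractLeft_one)

section

variable {R V : Type*} [CommRing R] [AddCommGroup V] [Module R V]

theorem ι_mul_prod_map_ι (x : V) (l : List V) :
    ι R x * (l.map (ι R)).prod = (-1 : R) ^ l.length • ((l.map (ι R)).prod * ι R x) := by
  induction l with
  | nil => simp
  | cons y l ih =>
    have hswap : ι R x * ι R y = -(ι R y * ι R x) :=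
      eq_neg_of_add_eq_zero_left (ι_add_mul_swap x y)
    rw [List.map_cons, List.prod_cons, ← mul_assoc, hswap, neg_mul, mul_assoc, ih,
      mul_smul_comm, List.length_cons, pow_succ, mul_neg_one, neg_smul, mul_assoc]

theorem ι_mul_prod_ofFn_eraseIdx {n : ℕ} (v : Fin n → V) (i : Fin n) :
    ι R (v i) * ((List.ofFn fun t => ι R (v t)).eraseIdx i).prod =
      (-1 : R) ^ (i : ℕ) • (List.ofFn fun t => ι R (v t)).prod := by
  induction n with
  | zero => exact i.elim0
  | succ n ih =>
    rw [List.ofFn_succ, List.prod_cons]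
    induction i using Fin.cases with
    | zero => simp
    | succ i =>
      have hswap : ι R (v i.succ) * ι R (v 0) = -(ι R (v 0) * ι R (v i.succ)) :=
        eq_neg_of_add_eq_zero_left (ι_add_mul_swap _ _)
      rw [Fin.val_succ, List.eraseIdx_cons_succ, List.prod_cons, ← mul_assoc, hswap, neg_mul,
        mul_assoc, ih (fun t => v t.succ) i, mul_smul_comm, pow_succ, mul_neg_one, neg_smul]

theorem contractLeft_prod_ofFn_ι (d : Dual R V) {n : ℕ} (v : Fin n → V) :
    contractLeft d (List.ofFn fun i => ι R (v i)).prod =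
      ∑ i : Fin n, ((-1 : R) ^ (i : ℕ) * d (v i)) •
        ((List.ofFn fun t => ι R (v t)).eraseIdx i).prod := by
  induction n with
  | zero => simp [contractLeft_one]
  | succ n ih =>
    rw [List.ofFn_succ, List.prod_cons, contractLeft_ι_mul, ih, Fin.sum_univ_succ]
    simp only [Fin.val_zero, pow_zero, one_mul, List.eraseIdx_cons_zero, Fin.val_succ,
      List.eraseIdx_cons_succ, List.prod_cons, pow_succ, Finset.mul_sum, sub_eq_add_neg,
      ← Finset.sum_neg_distrib, mul_smul_comm]
    congr 1
    refine Finset.sum_congr rfl fun i _ => ?_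
    rw [← neg_smul]
    congr 1
    ring

theorem ι_mul_prod_ofFn_eraseIdx_comm {n : ℕ} (x : V) (v : Fin (n + 1) → V) (i : Fin (n + 1)) :
    ι R x * ((List.ofFn fun t => ι R (v t)).eraseIdx i).prod =
      (-1 : R) ^ n • (((List.ofFn fun t => ι R (v t)).eraseIdx i).prod * ι R x) := by
  have hmap : (List.ofFn fun t => ι R (v t)).eraseIdx i = ((List.ofFn v).eraseIdx i).map (ι R) :=
    by rw [← List.eraseIdx_map, List.map_ofFn]; rfl
  rw [hmap, ι_mul_prod_map_ι, List.length_eraseIdx_of_lt (by rw [List.length_ofFn]; exact i.isLt),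
    List.length_ofFn, Nat.add_sub_cancel]

end

section

variable {R N : Type*} [CommRing R] [AddCommGroup N] [Module R N] {k ℓ : ℕ}
  (α : Fin (k + 1) → Dual R N) (β : Fin (ℓ + 1) → Dual R N)

theorem sum_sum_smul_ι_mul_eraseIdx_eq_contractLeft_mul (m' : Fin (ℓ + 1) → N) :
    ∑ i : Fin (k + 1), ∑ j : Fin (ℓ + 1), ((-1 : R) ^ ((i : ℕ) + (j : ℕ)) * α i (m' j)) •
        (ι R (β j) * ((List.ofFn fun t => ι R (α t)).eraseIdx i).prod *
          ((List.ofFn fun t => ι R (β t)).eraseIdx j).prod) =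
      (-1 : R) ^ k • (contractLeft (Dual.eval R N (∑ j, m' j))
        (List.ofFn fun t => ι R (α t)).prod * (List.ofFn fun t => ι R (β t)).prod) := by
  have hterm : ∀ (i : Fin (k + 1)) (j : Fin (ℓ + 1)),
      ((-1 : R) ^ ((i : ℕ) + (j : ℕ)) * α i (m' j)) •
      (ι R (β j) * ((List.ofFn fun t => ι R (α t)).eraseIdx i).prod *
        ((List.ofFn fun t => ι R (β t)).eraseIdx j).prod) =
      (-1 : R) ^ k • (((-1 : R) ^ (i : ℕ) * α i (m' j)) •
        (((List.ofFn fun t => ι R (α t)).eraseIdx i).prod *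
          (List.ofFn fun t => ι R (β t)).prod)) := by
    intro i j
    rw [ι_mul_prod_ofFn_eraseIdx_comm, smul_mul_assoc, mul_assoc, ι_mul_prod_ofFn_eraseIdx,
      mul_smul_comm, smul_smul, smul_smul, smul_smul]
    congr 1
    linear_combination (α i (m' j) * (-1) ^ k) * neg_one_pow_add_mul_neg_one_pow (R := R) i j
  simp only [hterm, ← Finset.smul_sum, contractLeft_prod_ofFn_ι, Finset.sum_mul, smul_mul_assoc,
    ← Finset.sum_smul, ← Finset.mul_sum, ← map_sum, Dual.eval_apply]

theorem sum_sum_smul_ι_mul_eraseIdx_eq_mul_contractLeft (m : Fin (k + 1) → N) :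
    ∑ i : Fin (k + 1), ∑ j : Fin (ℓ + 1), ((-1 : R) ^ ((i : ℕ) + (j : ℕ)) * β j (m i)) •
        (ι R (α i) * ((List.ofFn fun t => ι R (α t)).eraseIdx i).prod *
          ((List.ofFn fun t => ι R (β t)).eraseIdx j).prod) =
      (List.ofFn fun t => ι R (α t)).prod * contractLeft (Dual.eval R N (∑ i, m i))
        (List.ofFn fun t => ι R (β t)).prod := by
  have hterm : ∀ (i : Fin (k + 1)) (j : Fin (ℓ + 1)),
      ((-1 : R) ^ ((i : ℕ) + (j : ℕ)) * β j (m i)) •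
      (ι R (α i) * ((List.ofFn fun t => ι R (α t)).eraseIdx i).prod *
        ((List.ofFn fun t => ι R (β t)).eraseIdx j).prod) =
      ((-1 : R) ^ (j : ℕ) * β j (m i)) • ((List.ofFn fun t => ι R (α t)).prod *
        ((List.ofFn fun t => ι R (β t)).eraseIdx j).prod) := by
    intro i j
    rw [ι_mul_prod_ofFn_eraseIdx, smul_mul_assoc, smul_smul]
    congr 1
    linear_combination β j (m i) * neg_one_pow_add_mul_neg_one_pow (R := R) j i
  rw [Finset.sum_comm, contractLeft_prod_ofFn_ι, Finset.mul_sum]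
  simp only [hterm, ← Finset.sum_smul, ← Finset.mul_sum, ← map_sum, Dual.eval_apply,
    mul_smul_comm]

end

end ExteriorAlgebra

theorem schouten_closed_formula_general (N : Type) [AddCommGroup N]
    (n₁ n₂ : N) (k ℓ : ℕ)
    (α : Fin (k + 1) → Module.Dual ℤ N) (β : Fin (ℓ + 1) → Module.Dual ℤ N)
    -- the exponents of the generators: `a_0` carries `z^{n_1}`, the others `z^0`
    (m : Fin (k + 1) → N) (hm : m = fun i => if i = 0 then n₁ else 0)
    (m' : Fin (ℓ + 1) → N) (hm' : m' = fun j => if j = 0 then n₂ else 0)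
    -- the generators `a_i`, `b_j` as elements of `A = ℤ[N] ⊗ Λ^* M`
    (a : Fin (k + 1) → AddMonoidAlgebra (ExteriorAlgebra ℤ (Module.Dual ℤ N)) N)
    (ha : a = fun i => AddMonoidAlgebra.single (m i) (ExteriorAlgebra.ι ℤ (α i)))
    (b : Fin (ℓ + 1) → AddMonoidAlgebra (ExteriorAlgebra ℤ (Module.Dual ℤ N)) N)
    (hb : b = fun j => AddMonoidAlgebra.single (m' j) (ExteriorAlgebra.ι ℤ (β j))) :
    (∑ i : Fin (k + 1), ∑ j : Fin (ℓ + 1), ((-1 : ℤ) ^ ((i : ℕ) + (j : ℕ))) •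
      (AddMonoidAlgebra.single (m i + m' j)
          (ExteriorAlgebra.ι ℤ ((α i (m' j)) • β j - (β j (m i)) • α i)) *
        ((List.ofFn a).eraseIdx (i : ℕ)).prod *
        ((List.ofFn b).eraseIdx (j : ℕ)).prod)) =
    ((-1 : ℤ) ^ k) • AddMonoidAlgebra.single (n₁ + n₂)
      (ctr n₂ (List.ofFn fun i => ExteriorAlgebra.ι ℤ (α i)).prod *
          (List.ofFn fun j => ExteriorAlgebra.ι ℤ (β j)).prod +
        ((-1 : ℤ) ^ (k + 1)) •
          ((List.ofFn fun i => ExteriorAlgebra.ι ℤ (α i)).prod *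
            ctr n₁ (List.ofFn fun j => ExteriorAlgebra.ι ℤ (β j)).prod)) := by
  subst ha hb
  have hsum : ∑ i, m i = n₁ := by simp [hm]
  have hsum' : ∑ j, m' j = n₂ := by simp [hm']
  rw [AddMonoidAlgebra.sum_sum_smul_single_mul_prod_eraseIdx, hsum, hsum',
    AddMonoidAlgebra.smul_single]
  congr 1
  simp only [map_sub, map_smul, sub_mul, smul_mul_assoc, smul_sub, smul_smul,
    Finset.sum_sub_distrib]
  have hsign : (-1 : ℤ) ^ k * (-1) ^ (k + 1) = -1 := by
    rw [← pow_add, Odd.neg_one_pow ⟨k, by ring⟩]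
  rw [ExteriorAlgebra.sum_sum_smul_ι_mul_eraseIdx_eq_contractLeft_mul,
    ExteriorAlgebra.sum_sum_smul_ι_mul_eraseIdx_eq_mul_contractLeft, hsum, hsum', smul_add,
    smul_smul, hsign, neg_one_smul, sub_eq_add_neg]
  rfl

/-- **The closed formula for the Schouten–Nijenhuis bracket** (equation (schouten0)).
In `A = ℤ[N] ⊗ Λ^* M` with `a_0 = z^{n_1}⊗α_0`, `a_i = α_i` (`1 ≤ i ≤ k`),
`b_0 = z^{n_2}⊗β_0`, `b_j = β_j` (`1 ≤ j ≤ ℓ`), `α := α_0∧⋯∧α_k`, `β := β_0∧⋯∧β_ℓ`: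
`Σ_{i,j} (−1)^{i+j} [a_i, b_j] a_0⋯â_i⋯a_k b_0⋯b̂_j⋯b_ℓ
  = (−1)^k z^{n_1+n_2} ⊗ (ι_{n_2}(α)∧β + (−1)^{k+1} α∧ι_{n_1}(β))`,
where `[z^m⊗γ, z^{m′}⊗γ′] := z^{m+m′}⊗(γ(m′)γ′ − γ′(m)γ)` is the Lie bracket of
vector fields. -/
theorem schouten_closed_formula (N : Type) [AddCommGroup N] [Module.Free ℤ N]
    [Module.Finite ℤ N]
    (n₁ n₂ : N) (k ℓ : ℕ)
    (α : Fin (k + 1) → Module.Dual ℤ N) (β : Fin (ℓ + 1) → Module.Dual ℤ N)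
    -- the exponents of the generators: `a_0` carries `z^{n_1}`, the others `z^0`
    (m : Fin (k + 1) → N) (hm : m = fun i => if i = 0 then n₁ else 0)
    (m' : Fin (ℓ + 1) → N) (hm' : m' = fun j => if j = 0 then n₂ else 0)
    -- the generators `a_i`, `b_j` as elements of `A = ℤ[N] ⊗ Λ^* M`
    (a : Fin (k + 1) → AddMonoidAlgebra (ExteriorAlgebra ℤ (Module.Dual ℤ N)) N)
    (ha : a = fun i => AddMonoidAlgebra.single (m i) (ExteriorAlgebra.ι ℤ (α i)))
    (b : Fin (ℓ + 1) → AddMonoidAlgebra (ExteriorAlgebra ℤ (Module.Dual ℤ N)) N)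
    (hb : b = fun j => AddMonoidAlgebra.single (m' j) (ExteriorAlgebra.ι ℤ (β j))) :
    (∑ i : Fin (k + 1), ∑ j : Fin (ℓ + 1), ((-1 : ℤ) ^ ((i : ℕ) + (j : ℕ))) •
      (AddMonoidAlgebra.single (m i + m' j)
          (ExteriorAlgebra.ι ℤ ((α i (m' j)) • β j - (β j (m i)) • α i)) *
        ((List.ofFn a).eraseIdx (i : ℕ)).prod *
        ((List.ofFn b).eraseIdx (j : ℕ)).prod)) =
    ((-1 : ℤ) ^ k) • AddMonoidAlgebra.single (n₁ + n₂)
      (ctr n₂ (List.ofFn fun i => ExteriorAlgebra.ι ℤ (α i)).prod *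
          (List.ofFn fun j => ExteriorAlgebra.ι ℤ (β j)).prod +
        ((-1 : ℤ) ^ (k + 1)) •
          ((List.ofFn fun i => ExteriorAlgebra.ι ℤ (α i)).prod *
            ctr n₁ (List.ofFn fun j => ExteriorAlgebra.ι ℤ (β j)).prod)) :=
  schouten_closed_formula_general N n₁ n₂ k ℓ α β m hm m' hm' a ha b hb
end

section
/- Let N be a lattice with dual M, A := ℤ[N]⊗_ℤΛ^* M, and l_1(z^n⊗α) := z^n⊗ι_n(α). Then the 2-bracket l_2 agrees with the Schouten–Nijenhuis bracket on A_0 := ker(l_1). Concretely: for all n_1, n_2 ∈ N and homogeneous α, β ∈ Λ^* M with ι_{n_1}(α) = 0 and ι_{n_2}(β) = 0, one has ι_{n_1+n_2}(α∧β) = ι_{n_2}(α)∧β + (−1)^{deg α}·α∧ι_{n_1}(β), and hence l_2(z^{n_1}⊗α, z^{n_2}⊗β) = [z^{n_1}⊗α, z^{n_2}⊗β], where l_2(z^{n_1}⊗α, z^{n_2}⊗β) = (−1)^{deg α − 1}·z^{n_1+n_2}⊗ι_{n_1+n_2}(α∧β) and [·,·] is the Schouten–Nijenhuis bracket. -/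
open CliffordAlgebra in
theorem contractLeft_mul_of_mem_exteriorPower {R M : Type*} [CommRing R] [AddCommGroup M]
    [Module R M] (d : Module.Dual R M) {k : ℕ} {α : ExteriorAlgebra R M} (hα : α ∈ ⋀[R]^k M)
    (β : ExteriorAlgebra R M) :
    contractLeft (Q := 0) d (α * β) =
      contractLeft (Q := 0) d α * β + ((-1 : R) ^ k) • (α * contractLeft (Q := 0) d β) := by
  induction hα using Submodule.pow_induction_on_left' with
  | algebraMap r => simp [contractLeft_algebraMap_mul]
  | add x y i _ _ ihx ihy =>
      simp only [add_mul, map_add, ihx, ihy, smul_add]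
      abel
  | mem_mul m hm i x _ ih =>
      obtain ⟨v, rfl⟩ := hm
      change contractLeft d (ι 0 v * x * β) = contractLeft d (ι 0 v * x) * β + _
      rw [mul_assoc, contractLeft_ι_mul, contractLeft_ι_mul, ih]
      simp only [sub_mul, mul_add, mul_assoc, smul_mul_assoc, mul_smul_comm, pow_succ]
      module

theorem ctr_add {N : Type} [AddCommGroup N] (n₁ n₂ : N) : ctr (n₁ + n₂) = ctr n₁ + ctr n₂ := by
  simp only [ctr, map_add]

theorem l2_eq_schouten_general (N : Type) [AddCommGroup N]
    (n₁ n₂ : N) (dα : ℕ)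
    (α β : ExteriorAlgebra ℤ (Module.Dual ℤ N))
    (hα : α ∈ ⋀[ℤ]^dα (Module.Dual ℤ N))
    (h₁ : ctr n₁ α = 0) (h₂ : ctr n₂ β = 0) :
    ctr (n₁ + n₂) (α * β) = ctr n₂ α * β + ((-1 : ℤ) ^ dα) • (α * ctr n₁ β) ∧
    ((-1 : ℤ) ^ (dα + 1)) •
        AddMonoidAlgebra.single (M := N) (n₁ + n₂) (ctr (n₁ + n₂) (α * β)) =
      ((-1 : ℤ) ^ (dα + 1)) •
        AddMonoidAlgebra.single (M := N) (n₁ + n₂)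
          (ctr n₂ α * β + ((-1 : ℤ) ^ dα) • (α * ctr n₁ β)) := by
  have leibniz (n : N) (γ : ExteriorAlgebra ℤ (Module.Dual ℤ N)) :
      ctr n (α * γ) = ctr n α * γ + ((-1 : ℤ) ^ dα) • (α * ctr n γ) :=
    contractLeft_mul_of_mem_exteriorPower _ hα γ
  have h : ctr (n₁ + n₂) (α * β) = ctr n₂ α * β + ((-1 : ℤ) ^ dα) • (α * ctr n₁ β) := by
    rw [ctr_add, LinearMap.add_apply, leibniz, leibniz, h₁, h₂, zero_mul, mul_zero, smul_zero,
      zero_add, add_zero, add_comm]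
  exact ⟨h, by rw [h]⟩

/-- **Proposition `Schouten`: `l_2` agrees with the Schouten–Nijenhuis bracket on
`A_0 = ker l_1`.**  For homogeneous `α ∈ Λ^{dα} M` and `β ∈ Λ^{dβ} M` with `ι_{n₁}(α) = 0`
and `ι_{n₂}(β) = 0`, one has
`ι_{n₁+n₂}(α∧β) = ι_{n₂}(α)∧β + (−1)^{dα} α∧ι_{n₁}(β)`, hence
`l_2(z^{n₁}⊗α, z^{n₂}⊗β) = [z^{n₁}⊗α, z^{n₂}⊗β]` in `A = ℤ[N]⊗Λ^* M`, where
`l_2(z^{n₁}⊗α, z^{n₂}⊗β) = (−1)^{dα−1} z^{n₁+n₂}⊗ι_{n₁+n₂}(α∧β)` and the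
Schouten–Nijenhuis bracket is
`[z^{n₁}⊗α, z^{n₂}⊗β] = (−1)^{dα−1} z^{n₁+n₂}⊗(ι_{n₂}(α)∧β + (−1)^{dα} α∧ι_{n₁}(β))`. -/
theorem l2_eq_schouten (N : Type) [AddCommGroup N] [Module.Free ℤ N] [Module.Finite ℤ N]
    (n₁ n₂ : N) (dα dβ : ℕ)
    (α β : ExteriorAlgebra ℤ (Module.Dual ℤ N))
    (hα : α ∈ ⋀[ℤ]^dα (Module.Dual ℤ N)) (hβ : β ∈ ⋀[ℤ]^dβ (Module.Dual ℤ N))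
    (h₁ : ctr n₁ α = 0) (h₂ : ctr n₂ β = 0) :
    ctr (n₁ + n₂) (α * β) = ctr n₂ α * β + ((-1 : ℤ) ^ dα) • (α * ctr n₁ β) ∧
    ((-1 : ℤ) ^ (dα + 1)) •
        AddMonoidAlgebra.single (M := N) (n₁ + n₂) (ctr (n₁ + n₂) (α * β)) =
      ((-1 : ℤ) ^ (dα + 1)) •
        AddMonoidAlgebra.single (M := N) (n₁ + n₂)
          (ctr n₂ α * β + ((-1 : ℤ) ^ dα) • (α * ctr n₁ β)) :=
  l2_eq_schouten_general N n₁ n₂ dα α β hα h₁ h₂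
end

section
/- Let N be a lattice with dual M, A := ℤ[N]⊗_ℤΛ^* M, and δ := l_1, i.e. δ(z^n⊗α) = z^n⊗ι_n(α). Then (A, δ) is a Batalin–Vilkovisky algebra: δ lowers the degree deg by 1, δ∘δ = 0, and for all homogeneous a, b, c ∈ A the seven-term relation holds: δ(abc) = δ(ab)·c + (−1)^{deg a}·a·δ(bc) + (−1)^{deg b·(deg a + 1)}·b·δ(ac) − δ(a)·b·c − (−1)^{deg a}·a·δ(b)·c − (−1)^{deg a + deg b}·a·b·δ(c). -/
set_option synthInstance.maxHeartbeats 1000000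
set_option maxHeartbeats 1000000

open Module

/-- The operator `l_1 = δ` on `A = ℤ[N] ⊗ Λ^* M`: `l_1(z^n ⊗ α) = z^n ⊗ ι_n(α)`. -/
noncomputable def lOne {N : Type} [AddCommGroup N]
    (x : AddMonoidAlgebra (ExteriorAlgebra ℤ (Module.Dual ℤ N)) N) :
    AddMonoidAlgebra (ExteriorAlgebra ℤ (Module.Dual ℤ N)) N :=
  Finsupp.sum x.coeff fun n a => AddMonoidAlgebra.single n (ctr n a)

/-
For monomials `z^{n_a} ⊗ α`, `z^{n_b} ⊗ β`, `z^{n_c} ⊗ γ` every term of the seven-term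
relation is a multiple of `z^{n_a+n_b+n_c}`, and `ι_n` is additive in `n`; so the relation is
an identity in `Λ^* M` for the contraction by `ι_{n_a} + ι_{n_b} + ι_{n_c}`. Each `ι_n` is an
odd derivation of `Λ^* M`: expanding by the graded Leibniz rule, the terms cancel once `ι_n α`
and `α` are moved past `β` by graded commutativity. `δ² = 0` is `ι_n ∘ ι_n = 0`.
-/

open ExteriorAlgebra CliffordAlgebra

namespace ExteriorAlgebra

variable {R M : Type*} [CommRing R] [AddCommGroup M] [Module R M]

theorem ι_mem_exteriorPower_one (m : M) : ι R m ∈ ⋀[R]^1 M := by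
  rw [exteriorPower, pow_one]
  exact LinearMap.mem_range_self _ m

theorem ι_mul_graded_comm {q : ℕ} {y : ExteriorAlgebra R M} (hy : y ∈ ⋀[R]^q M) (m : M) :
    ι R m * y = ((-1 : ℤ) ^ q) • (y * ι R m) := by
  induction hy using Submodule.pow_induction_on_left' with
  | algebraMap r => rw [pow_zero, one_smul, Algebra.commutes]
  | add y y' _ _ _ ihy ihy' => rw [mul_add, add_mul, ihy, ihy', smul_add]
  | mem_mul _ hv i y _ ih =>
    obtain ⟨v, rfl⟩ := hv
    have anticomm : ι R m * ι R v = -(ι R v * ι R m) :=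
      eq_neg_of_add_eq_zero_left (ι_add_mul_swap m v)
    rw [← mul_assoc, anticomm, neg_mul, mul_assoc, ih, pow_succ]
    simp only [mul_smul_comm, mul_assoc]
    module

theorem graded_comm {p q : ℕ} {x y : ExteriorAlgebra R M}
    (hx : x ∈ ⋀[R]^p M) (hy : y ∈ ⋀[R]^q M) :
    x * y = ((-1 : ℤ) ^ (p * q)) • (y * x) := by
  induction hx using Submodule.pow_induction_on_left' with
  | algebraMap r => rw [zero_mul, pow_zero, one_smul, Algebra.commutes]
  | add x x' i _ _ ihx ihx' => rw [add_mul, mul_add, ihx, ihx', smul_add]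
  | mem_mul _ hv i x _ ih =>
    obtain ⟨v, rfl⟩ := hv
    rw [mul_assoc, ih, mul_smul_comm, ← mul_assoc, ι_mul_graded_comm hy v, smul_mul_assoc,
      smul_smul, ← pow_add, mul_assoc, Nat.succ_mul]

theorem contractLeft_eq_zero_of_mem_exteriorPower_zero (d : Module.Dual R M)
    {x : ExteriorAlgebra R M} (hx : x ∈ ⋀[R]^0 M) : contractLeft d x = 0 := by
  rw [exteriorPower, pow_zero, Submodule.mem_one] at hx
  obtain ⟨r, rfl⟩ := hx
  exact contractLeft_algebraMap _ d r

theorem contractLeft_mem_exteriorPower (d : Module.Dual R M) {p : ℕ}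
    {x : ExteriorAlgebra R M} (hx : x ∈ ⋀[R]^p M) :
    contractLeft d x ∈ ⋀[R]^(p - 1) M := by
  induction hx using Submodule.pow_induction_on_left' with
  | algebraMap r => rw [contractLeft_algebraMap]; exact zero_mem _
  | add x x' _ _ _ ihx ihx' => rw [map_add]; exact add_mem ihx ihx'
  | mem_mul _ hv i x hx ih =>
    obtain ⟨v, rfl⟩ := hv
    rw [contractLeft_ι_mul, Nat.succ_sub_one]
    refine sub_mem (Submodule.smul_mem _ _ hx) ?_
    rcases i with _ | i
    · rw [contractLeft_eq_zero_of_mem_exteriorPower_zero d hx, mul_zero]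
      exact zero_mem _
    · simpa [add_comm] using SetLike.mul_mem_graded (ι_mem_exteriorPower_one v) ih

theorem contractLeft_mul_of_mem_exteriorPower (d : Module.Dual R M) {p : ℕ}
    {x : ExteriorAlgebra R M} (hx : x ∈ ⋀[R]^p M) (y : ExteriorAlgebra R M) :
    contractLeft d (x * y) =
      contractLeft d x * y + ((-1 : ℤ) ^ p) • (x * contractLeft d y) := by
  induction hx using Submodule.pow_induction_on_left' with
  | algebraMap r =>
    rw [contractLeft_algebraMap_mul, contractLeft_algebraMap, zero_mul, zero_add, pow_zero,
      one_smul]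
  | add x x' i _ _ ihx ihx' =>
    rw [add_mul, map_add, ihx, ihx']
    simp only [map_add, add_mul, smul_add]
    abel
  | mem_mul _ hv i x _ ih =>
    obtain ⟨v, rfl⟩ := hv
    rw [mul_assoc, contractLeft_ι_mul, ih, contractLeft_ι_mul]
    simp only [mul_add, mul_smul_comm, smul_mul_assoc, sub_mul, pow_succ, mul_assoc]
    module

theorem contractLeft_mul_graded_comm (d : Module.Dual R M) {p q : ℕ}
    {x y : ExteriorAlgebra R M} (hx : x ∈ ⋀[R]^p M) (hy : y ∈ ⋀[R]^q M) :
    contractLeft d x * y = ((-1 : ℤ) ^ (q * (p + 1))) • (y * contractLeft d x) := by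
  rcases p with _ | p
  · rw [contractLeft_eq_zero_of_mem_exteriorPower_zero d hx, mul_zero, zero_mul, smul_zero]
  · rw [graded_comm (contractLeft_mem_exteriorPower d hx) hy, Nat.add_sub_cancel,
      show q * (p + 1 + 1) = p * q + 2 * q by ring, pow_add, pow_mul]
    norm_num

theorem contractLeft_seven_term (d₁ d₂ d₃ : Module.Dual R M) {p q : ℕ}
    {x y : ExteriorAlgebra R M} (hx : x ∈ ⋀[R]^p M) (hy : y ∈ ⋀[R]^q M)
    (z : ExteriorAlgebra R M) :
    contractLeft (d₁ + d₂ + d₃) (x * y * z) =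
      contractLeft (d₁ + d₂) (x * y) * z +
        ((-1 : ℤ) ^ p) • (x * contractLeft (d₂ + d₃) (y * z)) +
        ((-1 : ℤ) ^ (q * (p + 1))) • (y * contractLeft (d₁ + d₃) (x * z)) -
        contractLeft d₁ x * y * z - ((-1 : ℤ) ^ p) • (x * contractLeft d₂ y * z) -
        ((-1 : ℤ) ^ (p + q)) • (x * y * contractLeft d₃ z) := by
  have leibniz_x := fun d => contractLeft_mul_of_mem_exteriorPower d hx
  have leibniz_y := fun d => contractLeft_mul_of_mem_exteriorPower d hy
  have leibniz_xy := fun d =>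
    contractLeft_mul_of_mem_exteriorPower d (SetLike.mul_mem_graded hx hy)
  have swap_yx : ∀ w : ExteriorAlgebra R M,
      ((-1 : ℤ) ^ (q * (p + 1))) • (((-1 : ℤ) ^ p) • (y * x * w)) =
        ((-1 : ℤ) ^ (p + q)) • (x * y * w) := by
    intro w
    rw [graded_comm hy hx, smul_mul_assoc, smul_smul, smul_smul, ← pow_add, ← pow_add,
      show q * (p + 1) + p + q * p = p + q + 2 * (p * q) by ring, pow_add _ (p + q), pow_mul]
    norm_num
  simp only [map_add, LinearMap.add_apply, leibniz_xy, leibniz_x, leibniz_y,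
    mul_add (R := ExteriorAlgebra R M), smul_add, add_mul, smul_mul_assoc, mul_smul_comm,
    ← mul_assoc, contractLeft_mul_graded_comm _ hx hy, swap_yx]
  module

end ExteriorAlgebra

section Lattice

variable {N : Type} [AddCommGroup N]

open AddMonoidAlgebra

theorem lOne_single (n : N) (x : ExteriorAlgebra ℤ (Module.Dual ℤ N)) :
    lOne (single n x) = single n (ctr n x) := by
  rw [lOne, coeff_single, Finsupp.sum_single_index (by rw [map_zero, single_zero])]

theorem lOne_zero :
    lOne (0 : AddMonoidAlgebra (ExteriorAlgebra ℤ (Module.Dual ℤ N)) N) = 0 := by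
  rw [lOne, coeff_zero, Finsupp.sum_zero_index]

theorem lOne_add (u v : AddMonoidAlgebra (ExteriorAlgebra ℤ (Module.Dual ℤ N)) N) :
    lOne (u + v) = lOne u + lOne v := by
  rw [lOne, coeff_add, Finsupp.sum_add_index' (fun n => by rw [map_zero, single_zero])
    (fun n a b => by rw [map_add, single_add])]
  rfl

theorem lOne_lOne (x : AddMonoidAlgebra (ExteriorAlgebra ℤ (Module.Dual ℤ N)) N) :
    lOne (lOne x) = 0 := by
  induction x using AddMonoidAlgebra.induction with
  | zero => rw [lOne_zero, lOne_zero]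
  | single_add n a x _ _ ih =>
    rw [lOne_add, lOne_single, lOne_add, lOne_single, ih, add_zero, ctr,
      contractLeft_contractLeft, single_zero]

theorem lOne_seven_term {na nb nc : N} {da db : ℕ}
    {αa αb αc : ExteriorAlgebra ℤ (Module.Dual ℤ N)}
    (hαa : αa ∈ ⋀[ℤ]^da (Module.Dual ℤ N)) (hαb : αb ∈ ⋀[ℤ]^db (Module.Dual ℤ N))
    {a b c : AddMonoidAlgebra (ExteriorAlgebra ℤ (Module.Dual ℤ N)) N}
    (ha : a = single na αa) (hb : b = single nb αb) (hc : c = single nc αc) :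
    lOne (a * b * c) =
      lOne (a * b) * c + ((-1 : ℤ) ^ da) • (a * lOne (b * c)) +
        ((-1 : ℤ) ^ (db * (da + 1))) • (b * lOne (a * c)) -
        lOne a * b * c - ((-1 : ℤ) ^ da) • (a * lOne b * c) -
        ((-1 : ℤ) ^ (da + db)) • (a * b * lOne c) := by
  subst ha hb hc
  simp only [single_mul_single, lOne_single, smul_single]
  rw [← add_assoc na nb nc, add_left_comm nb na nc, ← add_assoc na nb nc]
  simp only [← AddMonoidAlgebra.single_add, ← AddMonoidAlgebra.single_sub]
  congr 1
  simp only [ctr, (Module.Dual.eval ℤ N).map_add]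
  exact contractLeft_seven_term _ _ _ hαa hαb αc

end Lattice

theorem bv_algebra_general (N : Type) [AddCommGroup N] :
    -- δ lowers the degree `deg` by 1: on a homogeneous element `z^n ⊗ x` of degree `d`,
    -- `δ(z^n ⊗ x) = z^n ⊗ ι_n(x)` is homogeneous of degree `d − 1`
    (∀ (n : N) (d : ℕ) (x : ExteriorAlgebra ℤ (Module.Dual ℤ N)),
      x ∈ ⋀[ℤ]^d (Module.Dual ℤ N) →
        lOne (AddMonoidAlgebra.single n x) = AddMonoidAlgebra.single n (ctr n x) ∧
        ctr n x ∈ ⋀[ℤ]^(d - 1) (Module.Dual ℤ N)) ∧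
    -- δ ∘ δ = 0
    (∀ x : AddMonoidAlgebra (ExteriorAlgebra ℤ (Module.Dual ℤ N)) N,
      lOne (lOne x) = 0) ∧
    -- the seven-term relation for homogeneous a = z^{na}⊗αa, b, c
    (∀ (na nb nc : N) (da db dc : ℕ)
      (αa αb αc : ExteriorAlgebra ℤ (Module.Dual ℤ N)),
      αa ∈ ⋀[ℤ]^da (Module.Dual ℤ N) → αb ∈ ⋀[ℤ]^db (Module.Dual ℤ N) →
      αc ∈ ⋀[ℤ]^dc (Module.Dual ℤ N) →
      ∀ (a b c : AddMonoidAlgebra (ExteriorAlgebra ℤ (Module.Dual ℤ N)) N),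
        a = AddMonoidAlgebra.single na αa → b = AddMonoidAlgebra.single nb αb →
        c = AddMonoidAlgebra.single nc αc →
        lOne (a * b * c) =
          lOne (a * b) * c + ((-1 : ℤ) ^ da) • (a * lOne (b * c)) +
            ((-1 : ℤ) ^ (db * (da + 1))) • (b * lOne (a * c)) -
            lOne a * b * c - ((-1 : ℤ) ^ da) • (a * lOne b * c) -
            ((-1 : ℤ) ^ (da + db)) • (a * b * lOne c)) :=
  ⟨fun n _ x hx => ⟨lOne_single n x, contractLeft_mem_exteriorPower _ hx⟩, lOne_lOne,
    fun _ _ _ _ _ _ _ _ _ hαa hαb _ _ _ _ => lOne_seven_term hαa hαb⟩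

/-- **Proposition `BVprop` (first half): `(A, l_1)` is a Batalin–Vilkovisky algebra.**
On `A = ℤ[N] ⊗ Λ^* M` the operator `δ = l_1` lowers the degree by `1`, satisfies
`δ ∘ δ = 0`, and satisfies the seven-term relation
`δ(abc) = δ(ab)c + (−1)^{deg a} a δ(bc) + (−1)^{deg b (deg a+1)} b δ(ac)
  − δ(a)bc − (−1)^{deg a} a δ(b) c − (−1)^{deg a + deg b} a b δ(c)`
for all homogeneous `a, b, c ∈ A`. -/
theorem bv_algebra (N : Type) [AddCommGroup N] [Module.Free ℤ N] [Module.Finite ℤ N] :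
    -- δ lowers the degree `deg` by 1: on a homogeneous element `z^n ⊗ x` of degree `d`,
    -- `δ(z^n ⊗ x) = z^n ⊗ ι_n(x)` is homogeneous of degree `d − 1`
    (∀ (n : N) (d : ℕ) (x : ExteriorAlgebra ℤ (Module.Dual ℤ N)),
      x ∈ ⋀[ℤ]^d (Module.Dual ℤ N) →
        lOne (AddMonoidAlgebra.single n x) = AddMonoidAlgebra.single n (ctr n x) ∧
        ctr n x ∈ ⋀[ℤ]^(d - 1) (Module.Dual ℤ N)) ∧
    -- δ ∘ δ = 0
    (∀ x : AddMonoidAlgebra (ExteriorAlgebra ℤ (Module.Dual ℤ N)) N,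
      lOne (lOne x) = 0) ∧
    -- the seven-term relation for homogeneous a = z^{na}⊗αa, b, c
    (∀ (na nb nc : N) (da db dc : ℕ)
      (αa αb αc : ExteriorAlgebra ℤ (Module.Dual ℤ N)),
      αa ∈ ⋀[ℤ]^da (Module.Dual ℤ N) → αb ∈ ⋀[ℤ]^db (Module.Dual ℤ N) →
      αc ∈ ⋀[ℤ]^dc (Module.Dual ℤ N) →
      ∀ (a b c : AddMonoidAlgebra (ExteriorAlgebra ℤ (Module.Dual ℤ N)) N),
        a = AddMonoidAlgebra.single na αa → b = AddMonoidAlgebra.single nb αb →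
        c = AddMonoidAlgebra.single nc αc →
        lOne (a * b * c) =
          lOne (a * b) * c + ((-1 : ℤ) ^ da) • (a * lOne (b * c)) +
            ((-1 : ℤ) ^ (db * (da + 1))) • (b * lOne (a * c)) -
            lOne a * b * c - ((-1 : ℤ) ^ da) • (a * lOne b * c) -
            ((-1 : ℤ) ^ (da + db)) • (a * b * lOne c)) :=
  bv_algebra_general N
end
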